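/- For any d×d density matrix ρ, the geometric measure of coherence is bounded above by the modified trace distance measure of coherence: 1 − sup_{δ diagonal density matrix} F(ρ, δ) ≤ inf_{λ ≥ 0, δ diagonal density matrix} ‖ρ − λδ‖_tr, where F(ρ, σ) = (Tr √(√σ ρ √σ))² is the fidelity. -/

import Mathlib

/-! Fix an incoherent `δ` and `λ ≥ 0`. The Powers–Størmer inequality
`‖A - B‖_tr ≥ Tr A + Tr B - 2 Re Tr (√A √B)`, applied to `A = ρ` and `B = λδ`,
gives `‖ρ - λδ‖_tr ≥ 1 + λ - 2 √λ Re Tr (√ρ √δ)`.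
Since `Re Tr (√ρ √δ) ≤ ‖√ρ √δ‖_tr = √F(ρ, δ)`, completing the square in `√λ`
yields `‖ρ - λδ‖_tr ≥ 1 - F(ρ, δ) ≥ C_g(ρ)`.
Both trace-norm estimates are instances of `Re Tr (W C) ≤ ‖C‖_tr` for unitary `W`:
take `W = 1`, respectively `W` the sign of `√A - √B`. -/

open Matrix
open scoped ComplexOrder

namespace Matrix.PosSemidef

/-- The positive semidefinite square root of a positive semidefinite matrix
(the definition removed from Mathlib, restated verbatim). -/
noncomputable def sqrt {n : Type*} [Fintype n] [DecidableEq n] {𝕜 : Type*} [RCLike 𝕜]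
    {A : Matrix n n 𝕜} (hA : PosSemidef A) : Matrix n n 𝕜 :=
  hA.1.eigenvectorUnitary.1 * diagonal ((↑) ∘ (√·) ∘ hA.1.eigenvalues) *
  (star hA.1.eigenvectorUnitary : Matrix n n 𝕜)

end Matrix.PosSemidef

/-- The trace norm of a matrix `A`: `‖A‖_tr = Tr √(AᴴA)`. -/
noncomputable def traceNorm {d : ℕ} (A : Matrix (Fin d) (Fin d) ℂ) : ℝ :=
  ((Matrix.posSemidef_conjTranspose_mul_self A).sqrt.trace).re

/-- The Hilbert–Schmidt norm of a matrix `A`: `‖A‖_HS = √(Tr(AᴴA))`. -/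
noncomputable def hsNorm {d : ℕ} (A : Matrix (Fin d) (Fin d) ℂ) : ℝ :=
  Real.sqrt (((Aᴴ * A).trace).re)

open scoped MatrixOrder

namespace Matrix

variable {m n 𝕜 : Type*} [RCLike 𝕜]

section Columns

variable [Fintype m]

lemma re_conjTranspose_mul_self_apply (A : Matrix m n 𝕜) (i : n) :
    RCLike.re ((Aᴴ * A) i i) = ∑ j, ‖A j i‖ ^ 2 := by
  simp only [mul_apply, conjTranspose_apply, RCLike.star_def, RCLike.conj_mul, map_sum]
  norm_cast

lemma norm_conjTranspose_mul_apply_le (A B : Matrix m n 𝕜) (i : n) :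
    ‖(Aᴴ * B) i i‖ ≤ √(RCLike.re ((Aᴴ * A) i i)) * √(RCLike.re ((Bᴴ * B) i i)) := by
  rw [re_conjTranspose_mul_self_apply, re_conjTranspose_mul_self_apply, mul_apply]
  calc ‖∑ j, Aᴴ i j * B j i‖ ≤ ∑ j, ‖A j i‖ * ‖B j i‖ := by
        simpa using norm_sum_le Finset.univ fun j => Aᴴ i j * B j i
    _ ≤ _ := Real.sum_mul_le_sqrt_mul_sqrt _ _ _

end Columns

variable [Fintype n]

lemma PosSemidef.re_trace_nonneg {A : Matrix n n 𝕜} (hA : A.PosSemidef) :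
    0 ≤ RCLike.re A.trace :=
  (RCLike.nonneg_iff.mp hA.trace_nonneg).1

variable [DecidableEq n]

namespace PosSemidef

variable {A B : Matrix n n 𝕜}

lemma sqrt_eq_cfcSqrt (hA : A.PosSemidef) : hA.sqrt = CFC.sqrt A := by
  rw [CFC.sqrt_eq_real_sqrt A hA.nonneg, cfcₙ_eq_cfc, hA.1.cfc_eq, IsHermitian.cfc,
    Unitary.conjStarAlgAut_apply]
  rfl

lemma posSemidef_sqrt (hA : A.PosSemidef) : hA.sqrt.PosSemidef := by
  rw [sqrt_eq_cfcSqrt]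
  exact (CFC.sqrt_nonneg A).posSemidef

lemma sqrt_mul_self (hA : A.PosSemidef) : hA.sqrt * hA.sqrt = A := by
  rw [sqrt_eq_cfcSqrt]
  exact CFC.sqrt_mul_sqrt_self A hA.nonneg

lemma sqrt_eq_of_mul_self_eq (hA : A.PosSemidef) (hB : B.PosSemidef) (h : B * B = A) :
    hA.sqrt = B := by
  rw [sqrt_eq_cfcSqrt]
  exact CFC.sqrt_unique h hB.nonneg

lemma sqrt_congr (hA : A.PosSemidef) (hB : B.PosSemidef) (h : A = B) : hA.sqrt = hB.sqrt := by
  subst h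
  rfl

lemma sqrt_smul (hA : A.PosSemidef) {r : ℝ} (hr : 0 ≤ r) (hrA : (r • A).PosSemidef) :
    hrA.sqrt = √r • hA.sqrt := by
  refine hrA.sqrt_eq_of_mul_self_eq (hA.posSemidef_sqrt.smul (Real.sqrt_nonneg r)) ?_
  rw [smul_mul_smul_comm, hA.sqrt_mul_self, Real.mul_self_sqrt hr]

lemma sqrt_mul_mul_sqrt (hA : A.PosSemidef) (hB : B.PosSemidef) :
    (hA.sqrt * B * hA.sqrt).PosSemidef := by
  have := hB.conjTranspose_mul_mul_same hA.sqrt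
  rwa [hA.posSemidef_sqrt.1.eq] at this

lemma re_trace_sqrt (hA : A.PosSemidef) :
    RCLike.re hA.sqrt.trace = ∑ i, √(hA.1.eigenvalues i) := by
  rw [sqrt, trace_mul_cycle, Unitary.coe_star_mul_self, one_mul, trace_diagonal, map_sum]
  simp

lemma re_trace_mul_nonneg (hA : A.PosSemidef) (hB : B.PosSemidef) :
    0 ≤ RCLike.re (A * B).trace := by
  have htr : (A * B).trace = (hA.sqrt * B * hA.sqrt).trace := by
    rw [trace_mul_cycle, hA.sqrt_mul_self]
  rw [htr]
  exact (hA.sqrt_mul_mul_sqrt hB).re_trace_nonneg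

lemma eigenvalues_le_re_trace (hA : A.PosSemidef) (i : n) :
    hA.1.eigenvalues i ≤ RCLike.re A.trace := by
  rw [hA.1.trace_eq_sum_eigenvalues, map_sum]
  simpa using Finset.single_le_sum (fun j _ => hA.eigenvalues_nonneg j) (Finset.mem_univ i)

lemma le_re_trace_smul_one (hA : A.PosSemidef) :
    A ≤ RCLike.re A.trace • (1 : Matrix n n 𝕜) := by
  rw [← Algebra.algebraMap_eq_smul_one]
  refine le_algebraMap_of_spectrum_le (fun x hx => ?_) hA.1
  rw [hA.1.spectrum_real_eq_range_eigenvalues] at hx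
  obtain ⟨i, rfl⟩ := hx
  exact hA.eigenvalues_le_re_trace i

lemma re_trace_mul_le (hA : A.PosSemidef) (hB : B.PosSemidef) :
    RCLike.re (A * B).trace ≤ RCLike.re A.trace * RCLike.re B.trace := by
  have := re_trace_mul_nonneg hA hB.le_re_trace_smul_one
  rw [mul_sub, trace_sub, map_sub, mul_smul_comm, mul_one, trace_smul, RCLike.smul_re] at this
  linarith

lemma re_trace_sqrt_le (hA : A.PosSemidef) :
    RCLike.re hA.sqrt.trace ≤ Fintype.card n * √(RCLike.re A.trace) := by
  rw [re_trace_sqrt]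
  simpa using Finset.sum_le_card_nsmul Finset.univ _ _
    fun i _ => Real.sqrt_le_sqrt (hA.eigenvalues_le_re_trace i)

end PosSemidef

theorem re_trace_unitary_mul_le (C : Matrix n n 𝕜) {W : Matrix n n 𝕜}
    (hW : W ∈ unitaryGroup n 𝕜) :
    RCLike.re (W * C).trace ≤ RCLike.re (posSemidef_conjTranspose_mul_self C).sqrt.trace := by
  set hC := posSemidef_conjTranspose_mul_self C
  set U : Matrix n n 𝕜 := (hC.1.eigenvectorUnitary : Matrix n n 𝕜)
  have hU : Uᴴ * U = 1 := Unitary.coe_star_mul_self _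
  have hU' : U * Uᴴ = 1 := Unitary.coe_mul_star_self _
  have hW' : W * Wᴴ = 1 := mem_unitaryGroup_iff.mp hW
  have hWU : (Wᴴ * U)ᴴ * (Wᴴ * U) = 1 := by
    rw [conjTranspose_mul, conjTranspose_conjTranspose, mul_assoc, ← mul_assoc W, hW', one_mul,
      hU]
  have hCU : (C * U)ᴴ * (C * U) = diagonal (RCLike.ofReal ∘ hC.1.eigenvalues) := by
    rw [← hC.1.conjStarAlgAut_star_eigenvectorUnitary, Unitary.conjStarAlgAut_star_apply]
    simp only [conjTranspose_mul, mul_assoc, U, star_eq_conjTranspose]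
  have htr : (W * C).trace = ((Wᴴ * U)ᴴ * (C * U)).trace := by
    rw [conjTranspose_mul, conjTranspose_conjTranspose, mul_assoc, ← mul_assoc W,
      trace_mul_comm Uᴴ]
    simp only [mul_assoc, hU', mul_one]
  rw [htr, hC.re_trace_sqrt, trace, map_sum]
  refine Finset.sum_le_sum fun i _ => (RCLike.re_le_norm _).trans ?_
  have := norm_conjTranspose_mul_apply_le (Wᴴ * U) (C * U) i
  rwa [hWU, hCU, one_apply_eq, diagonal_apply_eq, RCLike.one_re, Real.sqrt_one, one_mul,
    Function.comp_apply, RCLike.ofReal_re] at this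

namespace IsHermitian

variable {S : Matrix n n 𝕜}

lemma exists_unitary_mul_eq_cfc_abs (hS : S.IsHermitian) :
    ∃ W ∈ unitaryGroup n 𝕜,
      S * W = cfc (fun x : ℝ => |x|) S ∧ W * S = cfc (fun x : ℝ => |x|) S := by
  -- `sgn 0 = 1` makes `cfc sgn S` unitary.
  set sgn : ℝ → ℝ := fun x => if 0 ≤ x then 1 else -1
  have hsgn : ContinuousOn sgn (spectrum ℝ S) := S.finite_real_spectrum.continuousOn _
  have hsgn_mul : ∀ x, x * sgn x = |x| := fun x => by
    by_cases hx : 0 ≤ x <;> simp [sgn, hx, abs_of_nonneg, abs_of_neg, not_le.mp]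
  refine ⟨cfc sgn S, ?_, ?_, ?_⟩
  · rw [mem_unitaryGroup_iff, (cfc_predicate sgn S).star_eq, ← cfc_mul _ _ S hsgn hsgn]
    exact (cfc_congr fun x _ => by by_cases hx : 0 ≤ x <;> simp [sgn, hx]).trans
      (cfc_const_one ℝ S)
  · calc S * cfc sgn S = cfc (fun x : ℝ => x) S * cfc sgn S := by rw [cfc_id' ℝ S]
      _ = _ := (cfc_mul _ _ S (by fun_prop) hsgn).symm.trans (cfc_congr fun x _ => hsgn_mul x)
  · calc cfc sgn S * S = cfc sgn S * cfc (fun x : ℝ => x) S := by rw [cfc_id' ℝ S]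
      _ = _ := (cfc_mul _ _ S hsgn (by fun_prop)).symm.trans
        (cfc_congr fun x _ => (mul_comm _ _).trans (hsgn_mul x))

lemma le_cfc_abs (hS : S.IsHermitian) : S ≤ cfc (fun x : ℝ => |x|) S := by
  conv_lhs => rw [← cfc_id' ℝ S hS]
  exact cfc_mono fun x _ => le_abs_self x

lemma neg_le_cfc_abs (hS : S.IsHermitian) : -S ≤ cfc (fun x : ℝ => |x|) S := by
  rw [← cfc_neg_id (R := ℝ) S hS]
  exact cfc_mono fun x _ => neg_le_abs x

end IsHermitian

namespace PosSemidef

variable {A B : Matrix n n 𝕜}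

theorem powers_stormer (hA : A.PosSemidef) (hB : B.PosSemidef) :
    RCLike.re A.trace + RCLike.re B.trace - 2 * RCLike.re (hA.sqrt * hB.sqrt).trace ≤
      RCLike.re (posSemidef_conjTranspose_mul_self (A - B)).sqrt.trace := by
  set P := hA.sqrt
  set Q := hB.sqrt
  set S := P - Q
  have hS : S.IsHermitian := hA.posSemidef_sqrt.1.sub hB.posSemidef_sqrt.1
  obtain ⟨W, hW, hSW, hWS⟩ := hS.exists_unitary_mul_eq_cfc_abs
  set T := cfc (fun x : ℝ => |x|) S
  have hAB : A - B = P * S + S * Q := by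
    rw [mul_sub, sub_mul, hA.sqrt_mul_self, hB.sqrt_mul_self]
    abel
  have hSS : (S * S).trace = A.trace + B.trace - 2 * (P * Q).trace := by
    rw [sub_mul, mul_sub, mul_sub, hA.sqrt_mul_self, hB.sqrt_mul_self, trace_sub, trace_sub,
      trace_sub, trace_mul_comm Q P]
    ring
  have htrace : (W * (A - B)).trace =
      (S * S).trace + (P * (T - S)).trace + (Q * (T + S)).trace := by
    rw [hAB, mul_add, trace_add, trace_mul_comm W, mul_assoc, hSW, ← mul_assoc, hWS,
      trace_mul_comm T, show S * S = P * S - Q * S from sub_mul P Q S, mul_sub P T S,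
      mul_add Q T S]
    simp only [trace_add, trace_sub]
    ring
  have hPT := hA.posSemidef_sqrt.re_trace_mul_nonneg hS.le_cfc_abs
  have hTS : (T + S).PosSemidef := by simpa using le_iff.mp hS.neg_le_cfc_abs
  have hQT := hB.posSemidef_sqrt.re_trace_mul_nonneg hTS
  have hdual := re_trace_unitary_mul_le (A - B) hW
  rw [htrace, hSS] at hdual
  simp only [map_add, map_sub, RCLike.ofNat_mul_re] at hdual
  linarith

lemma re_trace_sqrt_mul_sqrt_le (hA : A.PosSemidef) (hB : B.PosSemidef)
    (h : (hB.sqrt * A * hB.sqrt).PosSemidef) :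
    RCLike.re (hA.sqrt * hB.sqrt).trace ≤ RCLike.re h.sqrt.trace := by
  have hC : (hA.sqrt * hB.sqrt)ᴴ * (hA.sqrt * hB.sqrt) = hB.sqrt * A * hB.sqrt := by
    rw [conjTranspose_mul, hA.posSemidef_sqrt.1.eq, hB.posSemidef_sqrt.1.eq, mul_assoc,
      ← mul_assoc hA.sqrt, hA.sqrt_mul_self, mul_assoc]
  simpa [sqrt_congr _ h hC] using
    re_trace_unitary_mul_le (hA.sqrt * hB.sqrt) (one_mem (unitaryGroup n 𝕜))

lemma re_trace_sqrt_sqrt_mul_mul_sqrt_le (hA : A.PosSemidef) (hB : B.PosSemidef)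
    (h : (hB.sqrt * A * hB.sqrt).PosSemidef) :
    RCLike.re h.sqrt.trace ≤ Fintype.card n * √(RCLike.re A.trace * RCLike.re B.trace) := by
  have htr : (hB.sqrt * A * hB.sqrt).trace = (A * B).trace := by
    rw [trace_mul_cycle, hB.sqrt_mul_self, trace_mul_comm]
  refine h.re_trace_sqrt_le.trans ?_
  rw [htr]
  gcongr
  exact hA.re_trace_mul_le hB

theorem re_trace_sub_sq_le_trace_sqrt_sub_smul (hA : A.PosSemidef) (hB : B.PosSemidef)
    (hBtr : B.trace = 1) (h : (hB.sqrt * A * hB.sqrt).PosSemidef) {l : ℝ} (hl : 0 ≤ l) :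
    RCLike.re A.trace - RCLike.re h.sqrt.trace ^ 2 ≤
      RCLike.re (posSemidef_conjTranspose_mul_self (A - l • B)).sqrt.trace := by
  have hlB : (l • B).PosSemidef := hB.smul hl
  have hPS := hA.powers_stormer hlB
  have hF := hA.re_trace_sqrt_mul_sqrt_le hB h
  rw [hB.sqrt_smul hl hlB, mul_smul_comm, trace_smul, trace_smul, RCLike.smul_re,
    RCLike.smul_re, hBtr, RCLike.one_re] at hPS
  nlinarith [Real.sq_sqrt hl, Real.sqrt_nonneg l, sq_nonneg (√l - RCLike.re h.sqrt.trace)]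

end PosSemidef

end Matrix

/-- The geometric measure of coherence `C_g(ρ) = 1 − sup_{δ incoherent} F(ρ, δ)`,
with fidelity `F(ρ, δ) = (Tr √(√δ ρ √δ))²`, is bounded above by the modified
trace distance measure of coherence `C'_tr(ρ)`. -/
theorem geometric_coherence_le_modified_trace_coherence {d : ℕ}
    (ρ : Matrix (Fin d) (Fin d) ℂ) (hρ : ρ.PosSemidef) (hρtr : ρ.trace = 1) :
    1 - sSup {x : ℝ | ∃ (δ : Matrix (Fin d) (Fin d) ℂ) (hδ : δ.PosSemidef)
          (h : (hδ.sqrt * ρ * hδ.sqrt).PosSemidef),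
        δ.trace = 1 ∧ δ.IsDiag ∧ x = ((h.sqrt.trace).re) ^ 2}
      ≤ sInf {x : ℝ | ∃ (l : ℝ) (δ : Matrix (Fin d) (Fin d) ℂ),
          0 ≤ l ∧ δ.PosSemidef ∧ δ.trace = 1 ∧ δ.IsDiag ∧
          x = traceNorm (ρ - l • δ)} := by
  have hρre : ρ.trace.re = 1 := by simp [hρtr]
  have hdiag : (diagonal ρ.diag).PosSemidef := posSemidef_diagonal_iff.mpr fun _ => hρ.diag_nonneg
  refine le_csInf ⟨_, 0, _, le_rfl, hdiag, by rw [trace_diagonal, ← hρtr]; rfl,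
    isDiag_diagonal _, rfl⟩ ?_
  rintro _ ⟨l, δ, hl, hδ, hδtr, hδdiag, rfl⟩
  have h := hδ.sqrt_mul_mul_sqrt hρ
  refine le_trans (b := 1 - h.sqrt.trace.re ^ 2) (sub_le_sub_left (le_csSup ?bdd ?mem) 1) ?_
  case mem => exact ⟨δ, hδ, h, hδtr, hδdiag, rfl⟩
  case bdd =>
    -- `sSup` is junk on unbounded sets; the crude bound `d²` suffices.
    refine ⟨(d : ℝ) ^ 2, ?_⟩
    rintro _ ⟨δ', hδ', h', hδ'tr, -, rfl⟩
    have hF := hρ.re_trace_sqrt_sqrt_mul_mul_sqrt_le hδ' h'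
    simp only [RCLike.re_to_complex, hρre, hδ'tr, Complex.one_re, mul_one, Real.sqrt_one,
      Fintype.card_fin] at hF
    exact pow_le_pow_left₀ h'.posSemidef_sqrt.re_trace_nonneg hF 2
  simpa [traceNorm, hρre] using hρ.re_trace_sub_sq_le_trace_sqrt_sub_smul hδ hδtr h hl
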